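/- arXiv:1201.6103 — 6 statements merged into one kernel-verified Lean document; each statement's English description precedes it below -/
import Mathlib

section
/- Let b ≥ 2 and τ > 0. The function f(s) = b·s^{b+4} − (b+4)·τ^4·s^b + 4·τ^{b+4} − 4·τ^{b+2}·(s−τ)^2 satisfies f(s) ≥ 0 for all s ≥ 0. -/
open Real

theorem stmt_0 (b τ s : ℝ) (hb : 2 ≤ b) (hτ : 0 < τ) (hs : 0 ≤ s) :
    0 ≤ b * s ^ (b + 4) - (b + 4) * τ ^ (4 : ℕ) * s ^ b
      + 4 * τ ^ (b + 4) - 4 * τ ^ (b + 2) * (s - τ) ^ (2 : ℕ) := by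
  have hb3 : (0:ℝ) < b + 3 := by linarith
  have hτ4 : τ ^ (4 : ℕ) = τ ^ (4 : ℝ) := by
    rw [← Real.rpow_natCast τ 4]; norm_num
  rcases hs.eq_or_lt with h0 | hsp
  · -- s = 0
    rw [← h0, Real.zero_rpow (by linarith : b + 4 ≠ 0),
      Real.zero_rpow (by linarith : b ≠ 0)]
    have hτe : τ ^ (b + 4) = τ ^ (b + 2) * τ ^ (2 : ℕ) := by
      have h2 := Real.rpow_add hτ (b + 2) 2
      rw [show b + 2 + 2 = b + 4 by ring] at h2
      rw [h2, ← Real.rpow_natCast τ 2]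
      norm_num
    rw [hτe]
    have hsq : ((0:ℝ) - τ) ^ (2:ℕ) = τ ^ (2:ℕ) := by ring
    rw [hsq]
    linarith [sq_nonneg τ]
  · -- s > 0
    have hApos : 0 < s ^ (b + 3) := Real.rpow_pos_of_pos hsp _
    have hBpos : 0 < τ ^ (b + 3) := Real.rpow_pos_of_pos hτ _
    have hXpos : 0 < s ^ (b - 1) := Real.rpow_pos_of_pos hsp _
    have hCpos : 0 < τ ^ (b + 2) := Real.rpow_pos_of_pos hτ _
    -- first AM-GM
    have k1 := Real.geom_mean_le_arith_mean2_weighted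
      (show (0:ℝ) ≤ (b-1)/(b+3) by
        apply div_nonneg <;> linarith)
      (show (0:ℝ) ≤ 4/(b+3) by positivity)
      hApos.le hBpos.le
      (show (b-1)/(b+3) + 4/(b+3) = 1 by field_simp; ring)
    have e1 : (s ^ (b+3)) ^ ((b-1)/(b+3)) = s ^ (b-1) := by
      rw [← Real.rpow_mul hsp.le]
      congr 1
      field_simp
    have e2 : (τ ^ (b+3)) ^ ((4:ℝ)/(b+3)) = τ ^ (4:ℝ) := by
      rw [← Real.rpow_mul hτ.le]
      congr 1
      field_simp
    rw [e1, e2] at k1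
    -- second AM-GM
    have k2 := Real.geom_mean_le_arith_mean2_weighted
      (show (0:ℝ) ≤ 1/(b+3) by positivity)
      (show (0:ℝ) ≤ (b+2)/(b+3) by
        apply div_nonneg <;> linarith)
      hApos.le hBpos.le
      (show 1/(b+3) + (b+2)/(b+3) = 1 by field_simp; ring)
    have e3 : (s ^ (b+3)) ^ ((1:ℝ)/(b+3)) = s := by
      rw [← Real.rpow_mul hsp.le]
      rw [show (b+3) * ((1:ℝ)/(b+3)) = 1 by field_simp, Real.rpow_one]
    have e4 : (τ ^ (b+3)) ^ ((b+2)/(b+3)) = τ ^ (b+2) := by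
      rw [← Real.rpow_mul hτ.le]
      congr 1
      field_simp
    rw [e3, e4] at k2
    -- clear denominators
    have k1' : (b+3) * (s ^ (b-1) * τ ^ (4:ℝ)) ≤ (b-1) * s ^ (b+3) + 4 * τ ^ (b+3) := by
      have h := mul_le_mul_of_nonneg_left k1 hb3.le
      calc (b+3) * (s ^ (b-1) * τ ^ (4:ℝ))
          ≤ (b+3) * ((b-1)/(b+3) * s ^ (b+3) + 4/(b+3) * τ ^ (b+3)) := h
        _ = (b-1) * s ^ (b+3) + 4 * τ ^ (b+3) := by field_simp
    have k2' : (b+3) * (s * τ ^ (b+2)) ≤ s ^ (b+3) + (b+2) * τ ^ (b+3) := by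
      have h := mul_le_mul_of_nonneg_left k2 hb3.le
      calc (b+3) * (s * τ ^ (b+2))
          ≤ (b+3) * (1/(b+3) * s ^ (b+3) + (b+2)/(b+3) * τ ^ (b+3)) := h
        _ = s ^ (b+3) + (b+2) * τ ^ (b+3) := by field_simp
    -- rpow identities
    have i1 : s ^ (b + 4) = s ^ (b+3) * s := by
      have h := Real.rpow_add hsp (b+3) 1
      rw [show b + 3 + 1 = b + 4 by ring, Real.rpow_one] at h
      exact h
    have i2 : s ^ b = s ^ (b-1) * s := by
      have h := Real.rpow_add hsp (b-1) 1
      rw [show b - 1 + 1 = b by ring, Real.rpow_one] at h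
      exact h
    have i3 : τ ^ (b + 3) = τ ^ (b+2) * τ := by
      have h := Real.rpow_add hτ (b+2) 1
      rw [show b + 2 + 1 = b + 3 by ring, Real.rpow_one] at h
      exact h
    have i4 : τ ^ (b + 4) = τ ^ (b+2) * τ * τ := by
      have h := Real.rpow_add hτ (b+2) 2
      rw [show b + 2 + 2 = b + 4 by ring] at h
      rw [h, show (2:ℝ) = (2:ℕ) by norm_num, Real.rpow_natCast]
      ring
    rw [i3] at k1' k2'
    rw [hτ4, i1, i2, i4]
    -- main estimate
    have key : 0 ≤ (b+3) * (b * (s ^ (b+3) * s) - (b + 4) * τ ^ (4:ℝ) * (s ^ (b-1) * s)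
        + 4 * (τ ^ (b+2) * τ * τ) - 4 * τ ^ (b+2) * (s - τ) ^ (2:ℕ)) := by
      have m1 := mul_le_mul_of_nonneg_left k1' hsp.le
      have m2 := mul_le_mul_of_nonneg_left k2' hsp.le
      nlinarith [mul_le_mul_of_nonneg_left m1 (show (0:ℝ) ≤ b + 4 by linarith),
        mul_le_mul_of_nonneg_left m2 (show (0:ℝ) ≤ 4 by norm_num)]
    have h0le : (b+3) * 0 ≤ (b+3) * (b * (s ^ (b+3) * s)
        - (b + 4) * τ ^ (4:ℝ) * (s ^ (b-1) * s)
        + 4 * (τ ^ (b+2) * τ * τ) - 4 * τ ^ (b+2) * (s - τ) ^ (2:ℕ)) := by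
      linarith
    linarith [le_of_mul_le_mul_left h0le hb3]
end

section
/- Let ψ : [0,∞) → [0,∞) be a decreasing differentiable function with −1 ≤ ψ'(s) ≤ 0, ψ(0) = 1, and suppose A := ∫₀^∞ s^{b−1} ψ(s) ds > 0 is finite, with b ≥ 2. Then for every τ > 0: b(b+4)·∫₀^∞ s^{b+3} ψ(s) ds − (b+4)·τ^4·(bA) + 4·τ^{b+4} ≥ (1/3)·τ^{b+2}. -/
/-!
With `w = -ψ'`, a probability density on `(0, ∞)` bounded by `1`, integration by parts gives
`∫ s ^ p * w = p * ∫ s ^ (p - 1) * ψ` (the boundary term `T ^ p * ψ T` vanishes because `ψ` is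
antitone and `s ^ (p - 1) * ψ` integrable), so the right-hand side is `∫ P * w` with
`P s = b * s ^ (b + 4) - (b + 4) * τ ^ 4 * s ^ b + 4 * τ ^ (b + 4)`. Since `P` and its derivative
vanish at `τ`, a monotonicity argument gives `P s ≥ 4 * τ ^ (b + 2) * (s - τ) ^ 2`. Finally, among
densities bounded by `1` the second moment about `τ` is smallest for the indicator of
`[τ - 1/2, τ + 1/2]`, whence `∫ (s - τ) ^ 2 * w ≥ 1 / 12`.
-/

open Real MeasureTheory Set Filter Topology

theorem nonneg_of_hasDerivAt_eq_sub_mul {f q : ℝ → ℝ} {c x : ℝ}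
    (hf : ∀ y, 0 ≤ y → HasDerivAt f ((y - c) * q y) y) (hq : MonotoneOn q (Ici 0))
    (hc : 0 ≤ c) (hqc : 0 ≤ q c) (hf0 : 0 ≤ f 0) (hfc : f c = 0) (hx : 0 ≤ x) :
    0 ≤ f x := by
  have hcont : ContinuousOn f (Ici 0) := fun y hy => (hf y hy).continuousAt.continuousWithinAt
  have hderiv : ∀ {a b : ℝ}, 0 ≤ a → ∀ y ∈ interior (Icc a b),
      HasDerivWithinAt f ((y - c) * q y) (interior (Icc a b)) y := by
    intro a b ha y hy
    rw [interior_Icc] at hy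
    exact (hf y (ha.trans hy.1.le)).hasDerivWithinAt
  have hsub : ∀ {a b : ℝ}, 0 ≤ a → Icc a b ⊆ Ici 0 := fun ha y hy => ha.trans hy.1
  rcases le_or_gt c x with hcx | hxc
  · have hmono : MonotoneOn f (Icc c x) :=
      monotoneOn_of_hasDerivWithinAt_nonneg (convex_Icc c x) (hcont.mono (hsub hc))
        (hderiv hc) fun y hy => by
          rw [interior_Icc] at hy
          exact mul_nonneg (by linarith [hy.1])
            (hqc.trans (hq hc (hc.trans hy.1.le) hy.1.le))
    simpa [hfc] using hmono (left_mem_Icc.2 hcx) (right_mem_Icc.2 hcx) hcx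
  rcases le_or_gt (q x) 0 with hqx | hqx
  · have hmono : MonotoneOn f (Icc 0 x) :=
      monotoneOn_of_hasDerivWithinAt_nonneg (convex_Icc 0 x) (hcont.mono (hsub le_rfl))
        (hderiv le_rfl) fun y hy => by
          rw [interior_Icc] at hy
          exact mul_nonneg_of_nonpos_of_nonpos (by linarith [hy.2])
            ((hq hy.1.le hx hy.2.le).trans hqx)
    exact hf0.trans (hmono (left_mem_Icc.2 hx) (right_mem_Icc.2 hx) hx)
  · have hanti : AntitoneOn f (Icc x c) :=
      antitoneOn_of_hasDerivWithinAt_nonpos (convex_Icc x c) (hcont.mono (hsub hx))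
        (hderiv hx) fun y hy => by
          rw [interior_Icc] at hy
          exact mul_nonpos_of_nonpos_of_nonneg (by linarith [hy.2])
            (hqx.le.trans (hq hx (hx.trans hy.1.le) hy.1.le))
    simpa [hfc] using hanti (left_mem_Icc.2 hxc.le) (right_mem_Icc.2 hxc.le) hxc.le

theorem hasDerivAt_sub_four_mul_rpow_mul_sq {b τ x : ℝ} (hb : 1 ≤ b) (hx : 0 ≤ x) :
    HasDerivAt (fun x => b * x ^ (b + 4) - (b + 4) * τ ^ (4 : ℕ) * x ^ b
      + 4 * τ ^ (b + 4) - 4 * τ ^ (b + 2) * (x - τ) ^ 2)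
      ((x - τ) * (b * (b + 4) * x ^ (b - 1) * (x + τ) * (x ^ 2 + τ ^ 2) - 8 * τ ^ (b + 2))) x := by
  have h := ((((hasDerivAt_rpow_const (p := b + 4) (Or.inr (by linarith))).const_mul b).sub
    ((hasDerivAt_rpow_const (p := b) (Or.inr hb)).const_mul ((b + 4) * τ ^ (4 : ℕ)))).add_const
    (4 * τ ^ (b + 4))).sub (((hasDerivAt_id x).sub_const τ).pow 2 |>.const_mul (4 * τ ^ (b + 2)))
  refine h.congr_deriv ?_
  have hx4 : x ^ (b + 4 - 1) = x ^ (b - 1) * x ^ (4 : ℕ) := by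
    rw [show b + 4 - 1 = b - 1 + (4 : ℕ) by push_cast; ring]
    exact rpow_add_natCast' hx (by push_cast; linarith)
  rw [hx4, id]
  ring

theorem four_mul_rpow_mul_sq_le {b τ s : ℝ} (hb : 1 ≤ b) (hτ : 0 ≤ τ) (hs : 0 ≤ s) :
    4 * τ ^ (b + 2) * (s - τ) ^ 2 ≤ b * s ^ (b + 4) - (b + 4) * τ ^ (4 : ℕ) * s ^ b
      + 4 * τ ^ (b + 4) := by
  have hpow : ∀ {a : ℝ} (n : ℕ), 0 < a + n → τ ^ (a + n) = τ ^ a * τ ^ n :=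
    fun n h => rpow_add_natCast' hτ h.ne'
  set q : ℝ → ℝ := fun x => b * (b + 4) * x ^ (b - 1) * (x + τ) * (x ^ 2 + τ ^ 2)
    - 8 * τ ^ (b + 2)
  have hq : MonotoneOn q (Ici 0) := by
    intro x hx y hy hxy
    simp only [mem_Ici] at hx hy
    have h1 : x ^ (b - 1) ≤ y ^ (b - 1) := rpow_le_rpow hx hxy (by linarith)
    have h2 : x ^ (b - 1) * (x + τ) * (x ^ 2 + τ ^ 2)
        ≤ y ^ (b - 1) * (y + τ) * (y ^ 2 + τ ^ 2) := by
      gcongr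
    simp only [q]
    have : 0 ≤ b * (b + 4) := by positivity
    nlinarith
  have hτ4 : τ ^ (b + 4) = τ ^ b * τ ^ (4 : ℕ) := hpow 4 (by push_cast; linarith)
  have hτ2 : τ ^ (b + 4) = τ ^ (b + 2) * τ ^ (2 : ℕ) := by
    rw [← hpow 2 (by push_cast; linarith)]; push_cast; ring_nf
  have hτ3 : τ ^ (b + 2) = τ ^ (b - 1) * τ ^ (3 : ℕ) := by
    rw [← hpow 3 (by push_cast; linarith)]; push_cast; ring_nf
  have key := nonneg_of_hasDerivAt_eq_sub_mul (fun x hx => hasDerivAt_sub_four_mul_rpow_mul_sq hb hx) hq hτ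
    ?_ ?_ ?_ hs
  · linarith
  · simp only [hτ3]
    have : 0 ≤ τ ^ (b - 1) * τ ^ 3 * (b * (b + 4) - 2) := by
      have : 0 ≤ b * (b + 4) - 2 := by nlinarith
      positivity
    linear_combination 4 * this
  · simp only [zero_rpow (by linarith : b + 4 ≠ 0), zero_rpow (by linarith : b ≠ 0), hτ2]
    exact le_of_eq (by ring)
  · simp only [hτ4]
    ring

theorem integral_Icc_sq_sub_sub_one_div_four (τ : ℝ) :
    ∫ s in Icc (τ - 1 / 2) (τ + 1 / 2), ((s - τ) ^ 2 - 1 / 4) = -1 / 6 := by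
  rw [integral_Icc_eq_integral_Ioc, ← intervalIntegral.integral_of_le (by linarith),
    intervalIntegral.integral_comp_sub_right (fun s => s ^ 2 - 1 / 4)]
  norm_num [integral_pow]

theorem one_div_twelve_le_setIntegral_sq_sub_mul {S : Set ℝ} {w : ℝ → ℝ} (τ : ℝ)
    (hS : MeasurableSet S) (hw : ∀ s ∈ S, 0 ≤ w s ∧ w s ≤ 1) (hw_int : IntegrableOn w S)
    (hw_mass : ∫ s in S, w s = 1) (hsq_int : IntegrableOn (fun s => (s - τ) ^ 2 * w s) S) :
    1 / 12 ≤ ∫ s in S, (s - τ) ^ 2 * w s := by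
  set φ : ℝ → ℝ := fun s => (s - τ) ^ 2 - 1 / 4
  set J := Icc (τ - 1 / 2) (τ + 1 / 2)
  have hφ_int : IntegrableOn φ J := (by fun_prop : Continuous φ).integrableOn_Icc
  have hφw_int : IntegrableOn (fun s => φ s * w s) S := by
    simp only [φ, sub_mul]
    exact hsq_int.sub (hw_int.const_mul _)
  -- `φ ≤ 0` exactly on `J`, so `φ * w` is smallest when `w` is the indicator of `J`
  have hpoint : ∀ s ∈ S, J.indicator φ s ≤ φ s * w s := by
    intro s hs
    obtain ⟨hw0, hw1⟩ := hw s hs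
    by_cases hsJ : s ∈ J
    · have : φ s ≤ 0 := by
        simp only [φ]; nlinarith [hsJ.1, hsJ.2]
      rw [indicator_of_mem hsJ]; nlinarith
    · have : 0 ≤ φ s := by
        simp only [J, mem_Icc, not_and_or, not_le] at hsJ
        simp only [φ]; rcases hsJ with h | h <;> nlinarith
      rw [indicator_of_notMem hsJ]; positivity
  have hmono : ∫ s in S, J.indicator φ s ≤ ∫ s in S, φ s * w s :=
    setIntegral_mono_on (hφ_int.integrable_indicator measurableSet_Icc).integrableOn
      hφw_int hS hpoint
  have hJ : -1 / 6 ≤ ∫ s in S, J.indicator φ s := by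
    rw [setIntegral_indicator measurableSet_Icc, ← integral_Icc_sq_sub_sub_one_div_four τ,
      ← neg_le_neg_iff, ← integral_neg, ← integral_neg]
    refine setIntegral_mono_set hφ_int.neg ?_ inter_subset_right.eventuallyLE
    refine (ae_restrict_iff' measurableSet_Icc).2 (ae_of_all _ fun s hs => ?_)
    simp only [Pi.zero_apply, φ, mem_Icc] at hs ⊢
    nlinarith [hs.1, hs.2]
  have hsplit : ∫ s in S, φ s * w s = (∫ s in S, (s - τ) ^ 2 * w s) - 1 / 4 := by
    simp only [φ, sub_mul]
    rw [integral_sub hsq_int (hw_int.const_mul _), integral_const_mul, hw_mass]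
    ring
  linarith

theorem tendsto_rpow_mul_of_integrableOn {ψ : ℝ → ℝ} {p : ℝ} (hp : 1 ≤ p)
    (hψ : ∀ s ∈ Ioi 0, 0 ≤ ψ s) (hanti : AntitoneOn ψ (Ioi 0))
    (hint : IntegrableOn (fun s => s ^ (p - 1) * ψ s) (Ioi 0)) :
    Tendsto (fun T => T ^ p * ψ T) atTop (𝓝 0) := by
  have htail : Tendsto (fun T => 2 ^ p * ∫ s in Ioi (T / 2), s ^ (p - 1) * ψ s) atTop (𝓝 0) := by
    simpa using (tendsto_integral_Ioi_zero (tendsto_id.atTop_div_const two_pos)).const_mul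
      ((2 : ℝ) ^ p)
  refine squeeze_zero' ?_ ?_ htail
  · filter_upwards [eventually_gt_atTop 0] with T hT
    exact mul_nonneg (rpow_nonneg hT.le _) (hψ T hT)
  filter_upwards [eventually_gt_atTop 0] with T hT
  have hT2 : 0 < T / 2 := by positivity
  have hlower : (T / 2) ^ (p - 1) * ψ T * (T / 2) ≤ ∫ s in Ioc (T / 2) T, s ^ (p - 1) * ψ s := by
    have hvol : ∫ _ in Ioc (T / 2) T, (T / 2) ^ (p - 1) * ψ T
        = (T / 2) ^ (p - 1) * ψ T * (T / 2) := by
      rw [setIntegral_const, volume_real_Ioc_of_le (by linarith), smul_eq_mul]; ring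
    rw [← hvol]
    refine setIntegral_mono_on (integrableOn_const measure_Ioc_lt_top.ne)
      (hint.mono_set fun s hs => hT2.trans hs.1) measurableSet_Ioc fun s hs => ?_
    have hs0 : 0 < s := hT2.trans hs.1
    exact mul_le_mul (rpow_le_rpow hT2.le hs.1.le (by linarith)) (hanti hs0 hT hs.2) (hψ T hT)
      (rpow_nonneg hs0.le _)
  have hupper : ∫ s in Ioc (T / 2) T, s ^ (p - 1) * ψ s ≤ ∫ s in Ioi (T / 2), s ^ (p - 1) * ψ s :=
    setIntegral_mono_set (hint.mono_set (Ioi_subset_Ioi hT2.le))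
      ((ae_restrict_iff' measurableSet_Ioi).2 (ae_of_all _ fun s hs =>
        mul_nonneg (rpow_nonneg (hT2.trans hs).le _) (hψ s (hT2.trans hs))))
      Ioc_subset_Ioi_self.eventuallyLE
  have hscale : T ^ p * ψ T = 2 ^ p * ((T / 2) ^ (p - 1) * ψ T * (T / 2)) := by
    have h1 : (T / 2) ^ (p - 1) * (T / 2) = (T / 2) ^ p := by
      rw [rpow_sub_one hT2.ne']; field_simp
    rw [mul_right_comm, h1, ← mul_assoc, ← mul_rpow zero_le_two hT2.le]
    ring_nf
  rw [hscale]
  gcongr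
  exact hlower.trans hupper

theorem integral_neg_deriv_Ioi {ψ : ℝ → ℝ} (hψ : Differentiable ℝ ψ)
    (hψ' : ∀ s ∈ Ioi 0, deriv ψ s ≤ 0) (hlim : Tendsto ψ atTop (𝓝 0)) :
    IntegrableOn (fun s => -deriv ψ s) (Ioi 0) ∧ ∫ s in Ioi 0, -deriv ψ s = ψ 0 := by
  have hderiv : ∀ s ∈ Ici (0 : ℝ), HasDerivAt (fun s => -ψ s) (-deriv ψ s) s :=
    fun s _ => (hψ s).hasDerivAt.neg
  have hnonneg : ∀ s ∈ Ioi (0 : ℝ), 0 ≤ -deriv ψ s := fun s hs => neg_nonneg.2 (hψ' s hs)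
  have hlim' : Tendsto (fun s => -ψ s) atTop (𝓝 0) := by simpa using hlim.neg
  refine ⟨integrableOn_Ioi_deriv_of_nonneg' hderiv hnonneg hlim', ?_⟩
  rw [integral_Ioi_of_hasDerivAt_of_nonneg' hderiv hnonneg hlim']
  ring

theorem integral_rpow_mul_neg_deriv_Ioi {ψ : ℝ → ℝ} {p : ℝ} (hp : 1 ≤ p)
    (hψ : Differentiable ℝ ψ) (hψ' : ∀ s ∈ Ioi 0, deriv ψ s ≤ 0)
    (hint : IntegrableOn (fun s => s ^ (p - 1) * ψ s) (Ioi 0))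
    (hlim : Tendsto (fun s => s ^ p * ψ s) atTop (𝓝 0)) :
    IntegrableOn (fun s => s ^ p * -deriv ψ s) (Ioi 0) ∧
      ∫ s in Ioi 0, s ^ p * -deriv ψ s = p * ∫ s in Ioi 0, s ^ (p - 1) * ψ s := by
  set G : ℝ → ℝ := fun s => p * (∫ t in 0..s, t ^ (p - 1) * ψ t) - s ^ p * ψ s
  have hcont : Continuous fun t : ℝ => t ^ (p - 1) * ψ t :=
    (continuous_rpow_const (by linarith)).mul hψ.continuous
  have hderiv : ∀ s ∈ Ici (0 : ℝ), HasDerivAt G (s ^ p * -deriv ψ s) s := by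
    intro s _
    have h := ((hcont.integral_hasStrictDerivAt 0 s).hasDerivAt.const_mul p).sub
      ((hasDerivAt_rpow_const (Or.inr hp)).mul (hψ s).hasDerivAt)
    refine h.congr_deriv ?_
    ring
  have hnonneg : ∀ s ∈ Ioi (0 : ℝ), 0 ≤ s ^ p * -deriv ψ s :=
    fun s hs => mul_nonneg (rpow_nonneg (le_of_lt hs) _) (neg_nonneg.2 (hψ' s hs))
  have hGlim : Tendsto G atTop (𝓝 (p * ∫ s in Ioi 0, s ^ (p - 1) * ψ s)) := by
    simpa using ((intervalIntegral_tendsto_integral_Ioi 0 hint tendsto_id).const_mul p).sub hlim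
  have hG0 : G 0 = 0 := by simp [G, zero_rpow (by linarith : p ≠ 0)]
  refine ⟨integrableOn_Ioi_deriv_of_nonneg' hderiv hnonneg hGlim, ?_⟩
  rw [integral_Ioi_of_hasDerivAt_of_nonneg' hderiv hnonneg hGlim, hG0, sub_zero]

theorem one_div_three_mul_rpow_le_of_density {w : ℝ → ℝ} {b τ : ℝ} (hb : 1 ≤ b) (hτ : 0 < τ)
    (hw : ∀ s ∈ Ioi 0, 0 ≤ w s ∧ w s ≤ 1) (hw_int : IntegrableOn w (Ioi 0))
    (hw_mass : ∫ s in Ioi 0, w s = 1)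
    (hb_int : IntegrableOn (fun s => s ^ b * w s) (Ioi 0))
    (hb4_int : IntegrableOn (fun s => s ^ (b + 4) * w s) (Ioi 0)) :
    1 / 3 * τ ^ (b + 2) ≤ b * (∫ s in Ioi 0, s ^ (b + 4) * w s)
      - (b + 4) * τ ^ (4 : ℕ) * (∫ s in Ioi 0, s ^ b * w s) + 4 * τ ^ (b + 4) := by
  set P : ℝ → ℝ := fun s => b * s ^ (b + 4) - (b + 4) * τ ^ (4 : ℕ) * s ^ b + 4 * τ ^ (b + 4)
  have hc : 0 < 4 * τ ^ (b + 2) := by positivity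
  have hP : ∀ s, P s * w s = b * (s ^ (b + 4) * w s)
      - (b + 4) * τ ^ (4 : ℕ) * (s ^ b * w s) + 4 * τ ^ (b + 4) * w s := fun s => by ring
  have hmoments_int : IntegrableOn
      (fun s => b * (s ^ (b + 4) * w s) - (b + 4) * τ ^ (4 : ℕ) * (s ^ b * w s)) (Ioi 0) :=
    (hb4_int.const_mul b).sub (hb_int.const_mul _)
  have hPw_int : IntegrableOn (fun s => P s * w s) (Ioi 0) := by
    simp only [hP]
    exact hmoments_int.add (hw_int.const_mul _)
  have hPw : ∫ s in Ioi 0, P s * w s = b * (∫ s in Ioi 0, s ^ (b + 4) * w s)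
      - (b + 4) * τ ^ (4 : ℕ) * (∫ s in Ioi 0, s ^ b * w s) + 4 * τ ^ (b + 4) := by
    simp only [hP]
    rw [integral_add hmoments_int (hw_int.const_mul _),
      integral_sub (hb4_int.const_mul b) (hb_int.const_mul _), integral_const_mul,
      integral_const_mul, integral_const_mul, hw_mass, mul_one]
  have hpoint : ∀ s ∈ Ioi (0 : ℝ), 4 * τ ^ (b + 2) * ((s - τ) ^ 2 * w s) ≤ P s * w s := by
    intro s hs
    rw [← mul_assoc]
    exact mul_le_mul_of_nonneg_right (four_mul_rpow_mul_sq_le hb hτ.le (le_of_lt hs)) (hw s hs).1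
  have hsq_int : IntegrableOn (fun s => (s - τ) ^ 2 * w s) (Ioi 0) := by
    refine Integrable.mono' (hPw_int.const_mul (4 * τ ^ (b + 2))⁻¹)
      (((continuous_sub_right τ).pow 2).aestronglyMeasurable.mul hw_int.aestronglyMeasurable)
      ((ae_restrict_iff' measurableSet_Ioi).2 (ae_of_all _ fun s hs => ?_))
    rw [norm_of_nonneg (mul_nonneg (sq_nonneg _) (hw s hs).1), le_inv_mul_iff₀ hc]
    exact hpoint s hs
  calc 1 / 3 * τ ^ (b + 2) = 4 * τ ^ (b + 2) * (1 / 12) := by ring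
    _ ≤ 4 * τ ^ (b + 2) * ∫ s in Ioi 0, (s - τ) ^ 2 * w s :=
      mul_le_mul_of_nonneg_left (one_div_twelve_le_setIntegral_sq_sub_mul τ measurableSet_Ioi hw
        hw_int hw_mass hsq_int) hc.le
    _ = ∫ s in Ioi 0, 4 * τ ^ (b + 2) * ((s - τ) ^ 2 * w s) := (integral_const_mul _ _).symm
    _ ≤ ∫ s in Ioi 0, P s * w s :=
      setIntegral_mono_on (hsq_int.const_mul _) hPw_int measurableSet_Ioi hpoint
    _ = _ := hPw

theorem stmt_3_general (b : ℝ) (hb : 2 ≤ b) (ψ : ℝ → ℝ)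
    (hpos : ∀ s, 0 ≤ s → 0 ≤ ψ s)
    (hanti : AntitoneOn ψ (Ici 0))
    (hdiff : Differentiable ℝ ψ)
    (hderiv : ∀ s, 0 ≤ s → -1 ≤ deriv ψ s ∧ deriv ψ s ≤ 0)
    (hψ0 : ψ 0 = 1)
    (hAint : IntegrableOn (fun s => s ^ (b - 1) * ψ s) (Ioi 0))
    (hDint : IntegrableOn (fun s => s ^ (b + 3) * ψ s) (Ioi 0))
    (τ : ℝ) (hτ : 0 < τ) :
    (1 / 3) * τ ^ (b + 2) ≤
      b * (b + 4) * (∫ s in Ioi (0 : ℝ), s ^ (b + 3) * ψ s)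
        - (b + 4) * τ ^ (4 : ℕ) * (b * ∫ s in Ioi (0 : ℝ), s ^ (b - 1) * ψ s)
        + 4 * τ ^ (b + 4) := by
  have hψ' : ∀ s ∈ Ioi (0 : ℝ), deriv ψ s ≤ 0 := fun s hs => (hderiv s (le_of_lt hs)).2
  have hpos' : ∀ s ∈ Ioi (0 : ℝ), 0 ≤ ψ s := fun s hs => hpos s (le_of_lt hs)
  have hanti' := hanti.mono Ioi_subset_Ici_self
  have hDint' : IntegrableOn (fun s => s ^ (b + 4 - 1) * ψ s) (Ioi 0) := by
    rwa [show b + 4 - 1 = b + 3 by ring]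
  have hlim_b := tendsto_rpow_mul_of_integrableOn (by linarith) hpos' hanti' hAint
  obtain ⟨hb_int, hb_eq⟩ := integral_rpow_mul_neg_deriv_Ioi (by linarith) hdiff hψ' hAint hlim_b
  obtain ⟨hb4_int, hb4_eq⟩ := integral_rpow_mul_neg_deriv_Ioi (by linarith) hdiff hψ' hDint'
    (tendsto_rpow_mul_of_integrableOn (by linarith) hpos' hanti' hDint')
  have hlim : Tendsto ψ atTop (𝓝 0) := by
    refine squeeze_zero' ?_ ?_ hlim_b
    all_goals filter_upwards [eventually_ge_atTop 1] with T hT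
    · exact hpos T (by linarith)
    · exact le_mul_of_one_le_left (hpos T (by linarith)) (one_le_rpow hT (by linarith))
  obtain ⟨hw_int, hw_mass⟩ := integral_neg_deriv_Ioi hdiff hψ' hlim
  have key := one_div_three_mul_rpow_le_of_density (by linarith) hτ
    (fun s hs => ⟨neg_nonneg.2 (hψ' s hs), by linarith [(hderiv s (le_of_lt hs)).1]⟩)
    hw_int (hw_mass.trans hψ0) hb_int hb4_int
  rw [hb_eq, hb4_eq, show b + 4 - 1 = b + 3 by ring] at key
  linear_combination key

theorem stmt_3 (b : ℝ) (hb : 2 ≤ b) (ψ : ℝ → ℝ)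
    (hpos : ∀ s, 0 ≤ s → 0 ≤ ψ s)
    (hanti : AntitoneOn ψ (Ici 0))
    (hdiff : Differentiable ℝ ψ)
    (hderiv : ∀ s, 0 ≤ s → -1 ≤ deriv ψ s ∧ deriv ψ s ≤ 0)
    (hψ0 : ψ 0 = 1)
    (hAint : IntegrableOn (fun s => s ^ (b - 1) * ψ s) (Ioi 0))
    (hA : 0 < ∫ s in Ioi (0 : ℝ), s ^ (b - 1) * ψ s)
    (hDint : IntegrableOn (fun s => s ^ (b + 3) * ψ s) (Ioi 0))
    (τ : ℝ) (hτ : 0 < τ) :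
    (1 / 3) * τ ^ (b + 2) ≤
      b * (b + 4) * (∫ s in Ioi (0 : ℝ), s ^ (b + 3) * ψ s)
        - (b + 4) * τ ^ (4 : ℕ) * (b * ∫ s in Ioi (0 : ℝ), s ^ (b - 1) * ψ s)
        + 4 * τ ^ (b + 4) :=
  stmt_3_general b hb ψ hpos hanti hdiff hderiv hψ0 hAint hDint τ hτ
end

section
/- For every real b with b ≥ 4, and every t with 0 ≤ t ≤ (b+2)(b+1)^{2/b}/(12(b+4)): (b − 4t)(1+t)^{4/b} ≥ b − (2(4+b)/b)·t^2 − (4(4−b)(4+b)/(3b^2))·t^3 − ((4−b)(2−b)(4+b)/b^3)·t^4 − (4(4−b)(2−b)(4−3b)/(3b^4))·t^5. -/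
/-! With `x = 4 / b ∈ (0, 1]`, the left-hand side factors as `(b - 4t)` times the degree-4 Taylor
polynomial of `(1 + t) ^ x`, and `b - 4t ≥ 0` on the given range of `t` (Bernoulli bounds
`(b + 1) ^ (2 / b)` by `3`). The Taylor polynomial is a lower bound: the remainder of order `n` of
`(1 + t) ^ y` has the sign of `y (y - 1) ⋯ (y - n + 1)`, by induction on `n` through the mean value
theorem, since the remainder's derivative is `y` times the remainder of order `n - 1` of
`(1 + t) ^ (y - 1)`. -/

open Real Polynomial Finset Nat

/-- The first `n` terms (degree `n - 1`) of the binomial series of `(1 + t) ^ y`. -/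
noncomputable def binomialTaylor (y t : ℝ) (n : ℕ) : ℝ :=
  ∑ k ∈ range n, (descPochhammer ℝ k).eval y / k ! * t ^ k

theorem descPochhammer_succ_eval_eq_mul (y : ℝ) (k : ℕ) :
    (descPochhammer ℝ (k + 1)).eval y = y * (descPochhammer ℝ k).eval (y - 1) := by
  simp [descPochhammer_succ_left, eval_comp]

theorem binomialTaylor_zero_right (y : ℝ) (n : ℕ) : binomialTaylor y 0 (n + 1) = 1 := by
  simp [binomialTaylor, sum_range_succ']

theorem hasDerivAt_binomialTaylor (y t : ℝ) (n : ℕ) :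
    HasDerivAt (fun s => binomialTaylor y s (n + 1)) (y * binomialTaylor (y - 1) t n) t := by
  have hsum : (fun s => binomialTaylor y s (n + 1)) = fun s =>
      (∑ k ∈ range n, (descPochhammer ℝ (k + 1)).eval y / (k + 1)! * s ^ (k + 1)) + 1 := by
    ext s
    simp [binomialTaylor, sum_range_succ']
  rw [hsum, binomialTaylor, mul_sum]
  refine (HasDerivAt.fun_sum fun k _ => ((hasDerivAt_pow (k + 1) t).const_mul _)).add_const 1
    |>.congr_deriv (sum_congr rfl fun k _ => ?_)
  rw [descPochhammer_succ_eval_eq_mul, factorial_succ]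
  push_cast
  field_simp

theorem exists_rpow_one_add_sub_binomialTaylor_eq (n : ℕ) (y : ℝ) {t : ℝ} (ht : 0 ≤ t) :
    ∃ r ≥ 0, (1 + t) ^ y - binomialTaylor y t n = (descPochhammer ℝ n).eval y * r := by
  induction n generalizing y t with
  | zero => exact ⟨(1 + t) ^ y, by positivity, by simp [binomialTaylor]⟩
  | succ n ih =>
    obtain rfl | ht := ht.eq_or_lt
    · exact ⟨0, le_rfl, by simp [binomialTaylor_zero_right]⟩
    set g := fun s => (1 + s) ^ y - binomialTaylor y s (n + 1)
    have hg : ∀ s > -1, HasDerivAt g (y * ((1 + s) ^ (y - 1) - binomialTaylor (y - 1) s n)) s := by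
      intro s hs
      have h := (((hasDerivAt_id s).const_add 1).rpow_const (p := y)
        (Or.inl (show 1 + s ≠ 0 by linarith))).fun_sub (hasDerivAt_binomialTaylor y s n)
      simpa only [mul_sub, id_eq, one_mul] using h
    obtain ⟨ξ, hξ, hslope⟩ := exists_hasDerivAt_eq_slope g _ ht
      (fun s hs => (hg s (by linarith [hs.1])).continuousAt.continuousWithinAt)
      (fun s hs => hg s (by linarith [hs.1]))
    obtain ⟨r, hr, hrem⟩ := ih (y - 1) hξ.1.le
    refine ⟨r * t, by positivity, ?_⟩
    have hg0 : g 0 = 0 := by simp [g, binomialTaylor_zero_right]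
    rw [hrem, hg0, sub_zero, sub_zero, eq_div_iff ht.ne'] at hslope
    rw [descPochhammer_succ_eval_eq_mul]
    linear_combination -hslope

theorem binomialTaylor_le_rpow_one_add {n : ℕ} {y t : ℝ}
    (hy : 0 ≤ (descPochhammer ℝ n).eval y) (ht : 0 ≤ t) :
    binomialTaylor y t n ≤ (1 + t) ^ y := by
  obtain ⟨r, hr, hrem⟩ := exists_rpow_one_add_sub_binomialTaylor_eq n y ht
  nlinarith [mul_nonneg hy hr]

theorem stmt_6 (b t : ℝ) (hb : 4 ≤ b) (ht0 : 0 ≤ t)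
    (ht1 : t ≤ (b + 2) * (b + 1) ^ ((2 : ℝ) / b) / (12 * (b + 4))) :
    b - (2 * (4 + b) / b) * t ^ (2 : ℕ) - (4 * (4 - b) * (4 + b) / (3 * b ^ (2 : ℕ))) * t ^ (3 : ℕ)
      - ((4 - b) * (2 - b) * (4 + b) / b ^ (3 : ℕ)) * t ^ (4 : ℕ)
      - (4 * (4 - b) * (2 - b) * (4 - 3 * b) / (3 * b ^ (4 : ℕ))) * t ^ (5 : ℕ)
    ≤ (b - 4 * t) * (1 + t) ^ ((4 : ℝ) / b) := by
  have hb0 : 0 < b := by linarith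
  have hbt : 0 ≤ b - 4 * t := by
    have hbern := rpow_one_add_le_one_add_mul_self (s := b) (p := 2 / b) (by linarith)
      (by positivity) (by rw [div_le_one hb0]; linarith)
    rw [add_comm 1 b, div_mul_cancel₀ _ hb0.ne'] at hbern
    have : t ≤ (b + 2) * 3 / (12 * (b + 4)) := ht1.trans (by gcongr; linarith)
    rw [le_div_iff₀ (by positivity)] at this
    nlinarith
  have hx0 : 0 ≤ 4 / b := by positivity
  have hx1 : 4 / b ≤ 1 := by rw [div_le_one hb0]; linarith
  have hc : 0 ≤ (descPochhammer ℝ 5).eval (4 / b) := by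
    have hprod : (descPochhammer ℝ 5).eval (4 / b)
        = 4 / b * ((1 - 4 / b) * (2 - 4 / b) * (3 - 4 / b) * (4 - 4 / b)) := by
      simp only [descPochhammer_succ_eval, descPochhammer_one, eval_X, cast_one, cast_ofNat]
      ring
    rw [hprod]
    apply mul_nonneg hx0
    apply_rules [mul_nonneg] <;> linarith
  calc _ = (b - 4 * t) * binomialTaylor (4 / b) t 5 := by
        simp only [binomialTaylor, sum_range_succ, sum_range_zero, descPochhammer_succ_eval,
          descPochhammer_zero, eval_one, factorial]
        push_cast
        field_simp
        ring
    _ ≤ _ := mul_le_mul_of_nonneg_left (binomialTaylor_le_rpow_one_add hc ht0) hbt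
end

section
/- For every real b ≥ 2 and every t ≥ 0: (1+t)^{(b+2)/b} ≥ 1 + ((b+2)/b)·t + ((b+2)/b^2)·t^2 + ((b+2)(2−b)/(3b^3))·t^3. -/
open Real Set

/-!
For `p = (b + 2) / b ∈ [1, 2]` the polynomial is the degree-3 Taylor polynomial of
`(1 + t) ^ p` at `0`, its cubic coefficient being `p (p - 1) (p - 2) / 6`. Differentiating
`(1 + t) ^ p` and its degree-`k` Taylor polynomial gives `p` times `(1 + t) ^ (p - 1)` and its
degree-`(k - 1)` Taylor polynomial, so since both sides agree at `0` and `p ≥ 0`, each lower bound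
follows from the one of lower degree for the exponent `p - 1`. The descent ends at Bernoulli's
inequality `1 + r t ≤ (1 + t) ^ r` for `r ≤ 0`, a consequence of `exp u ≥ 1 + u` and
`log (1 + t) ≤ t`.
-/

theorem one_add_mul_self_le_rpow_one_add_of_nonpos {s : ℝ} (hs : -1 < s) {p : ℝ} (hp : p ≤ 0) :
    1 + p * s ≤ (1 + s) ^ p := by
  have hs' : 0 < 1 + s := by linarith
  calc 1 + p * s ≤ 1 + p * log (1 + s) := by
        have hlog : log (1 + s) ≤ s := by linarith [log_le_sub_one_of_pos hs']
        linarith [mul_le_mul_of_nonpos_left hlog hp]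
    _ ≤ exp (log (1 + s) * p) := by linarith [add_one_le_exp (log (1 + s) * p)]
    _ = (1 + s) ^ p := (rpow_def_of_pos hs' p).symm

theorem le_of_hasDerivAt_le_hasDerivAt {f g f' g' : ℝ → ℝ} {a b : ℝ} (hab : a ≤ b)
    (ha : f a ≤ g a) (hf : ∀ x ∈ Icc a b, HasDerivAt f (f' x) x)
    (hg : ∀ x ∈ Icc a b, HasDerivAt g (g' x) x) (hle : ∀ x ∈ Ico a b, f' x ≤ g' x) :
    f b ≤ g b :=
  image_le_of_deriv_right_le_deriv_boundary
    (fun x hx => (hf x hx).continuousAt.continuousWithinAt)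
    (fun x hx => (hf x (Ico_subset_Icc_self hx)).hasDerivWithinAt) ha
    (fun x hx => (hg x hx).continuousAt.continuousWithinAt)
    (fun x hx => (hg x (Ico_subset_Icc_self hx)).hasDerivWithinAt) hle ⟨hab, le_rfl⟩

theorem hasDerivAt_rpow_one_add {p x : ℝ} (hx : -1 < x) :
    HasDerivAt (fun y : ℝ => (1 + y) ^ p) (p * (1 + x) ^ (p - 1)) x := by
  simpa using ((hasDerivAt_id x).const_add 1).rpow_const (p := p) (Or.inl (by simp; linarith))

theorem one_add_mul_add_sq_le_rpow_one_add {s : ℝ} (hs : 0 ≤ s) {p : ℝ} (hp0 : 0 ≤ p)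
    (hp1 : p ≤ 1) : 1 + p * s + p * (p - 1) / 2 * s ^ 2 ≤ (1 + s) ^ p := by
  have hpoly : ∀ x : ℝ, HasDerivAt (fun y : ℝ => 1 + p * y + p * (p - 1) / 2 * y ^ 2)
      (p * (1 + (p - 1) * x)) x := fun x =>
    ((((hasDerivAt_id x).const_mul p).const_add 1).add
      ((hasDerivAt_pow 2 x).const_mul (p * (p - 1) / 2))).congr_deriv (by push_cast; ring)
  refine le_of_hasDerivAt_le_hasDerivAt hs (by simp) (fun x _ => hpoly x)
    (fun x hx => hasDerivAt_rpow_one_add (by linarith [hx.1])) fun x hx => ?_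
  exact mul_le_mul_of_nonneg_left
    (one_add_mul_self_le_rpow_one_add_of_nonpos (by linarith [hx.1]) (by linarith)) hp0

theorem one_add_mul_add_sq_add_cube_le_rpow_one_add {s : ℝ} (hs : 0 ≤ s) {p : ℝ} (hp1 : 1 ≤ p)
    (hp2 : p ≤ 2) :
    1 + p * s + p * (p - 1) / 2 * s ^ 2 + p * (p - 1) * (p - 2) / 6 * s ^ 3 ≤ (1 + s) ^ p := by
  have hpoly : ∀ x : ℝ, HasDerivAt
      (fun y : ℝ => 1 + p * y + p * (p - 1) / 2 * y ^ 2 + p * (p - 1) * (p - 2) / 6 * y ^ 3)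
      (p * (1 + (p - 1) * x + (p - 1) * (p - 1 - 1) / 2 * x ^ 2)) x := fun x =>
    (((((hasDerivAt_id x).const_mul p).const_add 1).add
      ((hasDerivAt_pow 2 x).const_mul (p * (p - 1) / 2))).add
      ((hasDerivAt_pow 3 x).const_mul (p * (p - 1) * (p - 2) / 6))).congr_deriv
      (by push_cast; ring)
  refine le_of_hasDerivAt_le_hasDerivAt hs (by simp) (fun x _ => hpoly x)
    (fun x hx => hasDerivAt_rpow_one_add (by linarith [hx.1])) fun x hx => ?_
  exact mul_le_mul_of_nonneg_left
    (one_add_mul_add_sq_le_rpow_one_add hx.1 (by linarith) (by linarith)) (by linarith)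

theorem stmt_8 (b t : ℝ) (hb : 2 ≤ b) (ht : 0 ≤ t) :
    1 + ((b + 2) / b) * t + ((b + 2) / b ^ (2 : ℕ)) * t ^ (2 : ℕ)
      + ((b + 2) * (2 - b) / (3 * b ^ (3 : ℕ))) * t ^ (3 : ℕ)
    ≤ (1 + t) ^ ((b + 2) / b) := by
  have hb0 : 0 < b := by linarith
  have hp1 : 1 ≤ (b + 2) / b := by rw [le_div_iff₀ hb0]; linarith
  have hp2 : (b + 2) / b ≤ 2 := by rw [div_le_iff₀ hb0]; linarith
  convert one_add_mul_add_sq_add_cube_le_rpow_one_add ht hp1 hp2 using 1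
  field_simp
  ring
end

section
/- Let b ≥ 4 and let A > 0 satisfy (b+1)·bA ≥ 1. Set τ = (bA)^{1/b}·(1 + ((b+2)/(12(b+4)))·(bA)^{−2/b})^{1/b}. Then (b+4)·τ^4·(bA) − 4·τ^{b+4} + (1/3)·τ^{b+2} ≥ b·(bA)^{1+4/b} + (1/3)·(bA)^{1+2/b} + ((b+2)²/(72b(b+4)))·(bA) + ((13b³+56b²−52b−32)/(12b³))·((b+2)/(12(b+4)))³·(bA)^{1−2/b}. -/
/-! Put `x = bA`, `Y = x^{2/b}`, `c = (b+2)/(12(b+4))` and `t = c/Y`, so that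
`τ^b = x(1+t)` and the right-hand side equals `x (Y²(b - 4t)(1+t)^{4/b} + Y(1+t)^{1+2/b}/3)`.
Since `b + 1 ≤ 3^{b/2}` (Bernoulli), the hypothesis `(b+1)x ≥ 1` gives `Y ≥ 1/3`, hence
`t ≤ 1/4` and `b - 4t ≥ 0`. Both powers of `1 + t` may then be replaced by truncated binomial
series, which are lower bounds because the first omitted binomial coefficient is nonnegative.
What remains is a rational inequality in `Y` whose numerator is `P₁ Y (Y - 1/3) + P₃` with
`P₁, P₃ ≥ 0`. -/

open Real Finset Polynomial Nat

noncomputable def rpowTaylor (p u : ℝ) (n : ℕ) : ℝ :=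
  ∑ k ∈ range n, (descPochhammer ℝ k).eval p / k ! * u ^ k

lemma rpowTaylor_zero_right (p : ℝ) (n : ℕ) : rpowTaylor p 0 (n + 1) = 1 := by
  simp [rpowTaylor, sum_range_succ']

lemma rpowTaylor_four (p u : ℝ) :
    rpowTaylor p u 4 = 1 + p * u + p * (p - 1) / 2 * u ^ 2 + p * (p - 1) * (p - 2) / 6 * u ^ 3 := by
  simp [rpowTaylor, sum_range_succ, descPochhammer_succ_eval, factorial]

lemma rpowTaylor_five (p u : ℝ) :
    rpowTaylor p u 5 = rpowTaylor p u 4 + p * (p - 1) * (p - 2) * (p - 3) / 24 * u ^ 4 := by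
  simp [rpowTaylor, sum_range_succ, descPochhammer_succ_eval, factorial]

lemma hasDerivAt_rpowTaylor (p u : ℝ) (n : ℕ) :
    HasDerivAt (fun v => rpowTaylor p v (n + 1)) (p * rpowTaylor (p - 1) u n) u := by
  have h := (HasDerivAt.fun_sum (u := range n) fun k _ => (hasDerivAt_pow (k + 1) u).const_mul
    ((descPochhammer ℝ (k + 1)).eval p / (k + 1)!)).add_const 1
  simp only [rpowTaylor, sum_range_succ', pow_zero, descPochhammer_zero, eval_one, factorial_zero,
    cast_one, div_one, mul_one]
  refine h.congr_deriv ?_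
  rw [mul_sum]
  refine sum_congr rfl fun k _ => ?_
  rw [descPochhammer_succ_left, eval_mul, eval_X, eval_comp, eval_sub, eval_X, eval_one,
    factorial_succ]
  push_cast
  field_simp

lemma hasDerivAt_one_add_rpow (p : ℝ) {u : ℝ} (hu : 1 + u ≠ 0) :
    HasDerivAt (fun v => (1 + v) ^ p) (p * (1 + u) ^ (p - 1)) u := by
  simpa using ((hasDerivAt_id u).const_add 1).rpow_const (p := p) (Or.inl hu)

/-- The `u`-derivative of the remainder `(1 + u)^p - rpowTaylor p u (n + 1)` is `p` times the
remainder for `p - 1` and `n`, while `descPochhammer (n + 1)` at `p` is `p` times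
`descPochhammer n` at `p - 1`; so the sign condition passes from `(n, p - 1, ε p)` to
`(n + 1, p, ε)`. -/
theorem mul_rpowTaylor_le_mul_one_add_rpow (n : ℕ) {p ε u : ℝ} (hu : 0 ≤ u)
    (hε : 0 ≤ ε * (descPochhammer ℝ n).eval p) :
    ε * rpowTaylor p u n ≤ ε * (1 + u) ^ p := by
  induction n generalizing p ε u with
  | zero =>
    simp only [descPochhammer_zero, eval_one, mul_one] at hε
    simpa [rpowTaylor] using mul_nonneg hε (by positivity : (0 : ℝ) ≤ (1 + u) ^ p)
  | succ n ih =>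
    set f : ℝ → ℝ := fun v => ε * (1 + v) ^ p - ε * rpowTaylor p v (n + 1)
    suffices f 0 ≤ f u by simpa [f, rpowTaylor_zero_right] using this
    have hf : ∀ v ∈ Set.Ici (0 : ℝ),
        HasDerivAt f (ε * p * ((1 + v) ^ (p - 1) - rpowTaylor (p - 1) v n)) v := fun v hv =>
      (((hasDerivAt_one_add_rpow p (by linarith [Set.mem_Ici.1 hv])).const_mul ε).fun_sub
        ((hasDerivAt_rpowTaylor p v n).const_mul ε)).congr_deriv (by ring)
    refine monotoneOn_of_hasDerivWithinAt_nonneg (convex_Ici 0)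
      (fun v hv => (hf v hv).continuousAt.continuousWithinAt)
      (fun v hv => (hf v (interior_subset hv)).hasDerivWithinAt) (fun v hv => ?_)
      Set.self_mem_Ici hu hu
    rw [descPochhammer_succ_left, eval_mul, eval_X, eval_comp, eval_sub, eval_X, eval_one,
      ← mul_assoc] at hε
    have := ih (interior_subset hv : (0 : ℝ) ≤ v) hε
    linarith

lemma rpowTaylor_le_one_add_rpow {n : ℕ} {p u : ℝ} (hu : 0 ≤ u)
    (h : 0 ≤ (descPochhammer ℝ n).eval p) : rpowTaylor p u n ≤ (1 + u) ^ p := by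
  simpa using mul_rpowTaylor_le_mul_one_add_rpow n hu (ε := 1) (by simpa using h)

lemma descPochhammer_four_eval_nonneg {p : ℝ} (h1 : 1 ≤ p) (h2 : p ≤ 2) :
    0 ≤ (descPochhammer ℝ 4).eval p := by
  have h : (descPochhammer ℝ 4).eval p = p * (p - 1) * ((2 - p) * (3 - p)) := by
    simp only [descPochhammer_succ_eval, descPochhammer_one, eval_X, cast_one, cast_ofNat]
    ring
  rw [h]
  exact mul_nonneg (mul_nonneg (by linarith) (by linarith))
    (mul_nonneg (by linarith) (by linarith))

lemma descPochhammer_five_eval_nonneg {p : ℝ} (h0 : 0 ≤ p) (h1 : p ≤ 1) :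
    0 ≤ (descPochhammer ℝ 5).eval p := by
  have h : (descPochhammer ℝ 5).eval p = p * (1 - p) * ((2 - p) * (3 - p) * (4 - p)) := by
    simp only [descPochhammer_succ_eval, descPochhammer_one, eval_X, cast_one, cast_ofNat]
    ring
  rw [h]
  exact mul_nonneg (mul_nonneg h0 (by linarith))
    (mul_nonneg (mul_nonneg (by linarith) (by linarith)) (by linarith))

lemma add_one_le_three_rpow_half {b : ℝ} (hb : 2 ≤ b) : b + 1 ≤ 3 ^ (b / 2) := by
  have := one_add_mul_self_le_rpow_one_add (s := 2) (by norm_num) (p := b / 2) (by linarith)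
  norm_num at this
  linarith

lemma inv_three_le_rpow_two_div {b x : ℝ} (hb : 2 ≤ b) (hx : 0 < x) (h : 1 ≤ (b + 1) * x) :
    3⁻¹ ≤ x ^ (2 / b) := by
  rw [← rpow_le_rpow_iff (by norm_num) (by positivity) (by linarith : 0 < b / 2),
    ← rpow_mul hx.le, show 2 / b * (b / 2) = 1 by field_simp, rpow_one, inv_rpow (by norm_num),
    inv_le_iff_one_le_mul₀ (by positivity)]
  nlinarith [add_one_le_three_rpow_half hb]

lemma rpow_four_div {x : ℝ} (hx : 0 ≤ x) (b : ℝ) : x ^ (4 / b) = (x ^ (2 / b)) ^ 2 := by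
  rw [← rpow_mul_natCast hx]
  ring_nf

lemma combination_eq_of_eq_mul_rpow {b x t τ : ℝ} (hb : b ≠ 0) (hx : 0 < x) (h1t : 0 < 1 + t)
    (hτ : τ = x ^ (1 / b) * (1 + t) ^ (1 / b)) :
    (b + 4) * τ ^ 4 * x - 4 * τ ^ (b + 4) + 1 / 3 * τ ^ (b + 2)
      = x * ((x ^ (2 / b)) ^ 2 * (b - 4 * t) * (1 + t) ^ (4 / b)
          + x ^ (2 / b) * (1 + t) ^ (1 + 2 / b) / 3) := by
  have hτr (r : ℝ) : τ ^ r = x ^ (r / b) * (1 + t) ^ (r / b) := by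
    rw [hτ, mul_rpow (rpow_nonneg hx.le _) (rpow_nonneg h1t.le _), ← rpow_mul hx.le,
      ← rpow_mul h1t.le, one_div_mul_eq_div]
  have hsplit {z : ℝ} (k : ℝ) (hz : 0 < z) : z ^ ((b + k) / b) = z * z ^ (k / b) := by
    rw [add_div, div_self hb, rpow_add hz, rpow_one]
  rw [← rpow_natCast, Nat.cast_ofNat, hτr, hτr, hτr, hsplit 4 hx, hsplit 2 hx, hsplit 4 h1t,
    hsplit 2 h1t, rpow_add h1t, rpow_one, rpow_four_div hx.le]
  ring

section

variable {b Y c t : ℝ}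

lemma sub_four_mul_nonneg (hb : 4 ≤ b) (hY : 3⁻¹ ≤ Y) (hc : c = (b + 2) / (12 * (b + 4)))
    (ht : t = c / Y) : 0 ≤ b - 4 * t := by
  have hc0 : 0 ≤ c := by rw [hc]; positivity
  have hc12 : c ≤ 12⁻¹ := by rw [hc, div_le_iff₀ (by positivity)]; linarith
  have ht3 : t ≤ c / 3⁻¹ := ht ▸ div_le_div_of_nonneg_left hc0 (by norm_num) hY
  linarith [div_inv_eq_mul c 3]

lemma le_rpowTaylor_combination (hb : 4 ≤ b) (hY : 3⁻¹ ≤ Y)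
    (hc : c = (b + 2) / (12 * (b + 4))) (ht : t = c / Y) :
    b * Y ^ 2 + Y / 3 + (b + 2) ^ 2 / (72 * b * (b + 4))
        + (13 * b ^ 3 + 56 * b ^ 2 - 52 * b - 32) / (12 * b ^ 3) * c ^ 3 / Y
      ≤ Y ^ 2 * (b - 4 * t) * rpowTaylor (4 / b) t 5 + Y * rpowTaylor (1 + 2 / b) t 4 / 3 := by
  have hb0 : 0 < b := by linarith
  have hY0 : 0 < Y := lt_of_lt_of_le (by norm_num) hY
  have hc0 : 0 ≤ c := by rw [hc]; positivity
  set P₁ := (b ^ 2 - 4) * (3 * b - 8) / (12 * b ^ 3) * c ^ 3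
  set P₃ := 4 * (b - 4) * (b - 2) * (3 * b - 4) / (3 * b ^ 4) * c ^ 5
  have hP₁ : 0 ≤ P₁ := by
    have : 0 ≤ (b ^ 2 - 4) * (3 * b - 8) := by nlinarith
    exact mul_nonneg (div_nonneg this (by positivity)) (pow_nonneg hc0 3)
  have hP₃ : 0 ≤ P₃ := by
    have : 0 ≤ 4 * (b - 4) * (b - 2) * (3 * b - 4) :=
      mul_nonneg (mul_nonneg (mul_nonneg (by norm_num) (by linarith)) (by linarith)) (by linarith)
    exact mul_nonneg (div_nonneg this (by positivity)) (pow_nonneg hc0 5)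
  have hquad : 0 ≤ (P₁ * Y * (Y - 3⁻¹) + P₃) / Y ^ 3 := by
    have : 0 ≤ Y - 3⁻¹ := by linarith
    positivity
  refine sub_nonneg.1 (hquad.trans_eq ?_)
  rw [rpowTaylor_five, rpowTaylor_four, rpowTaylor_four]
  simp only [P₁, P₃]
  subst ht hc
  field_simp
  ring

lemma rpowTaylor_combination_le (hb : 4 ≤ b) (hY : 3⁻¹ ≤ Y)
    (hc : c = (b + 2) / (12 * (b + 4))) (ht : t = c / Y) :
    Y ^ 2 * (b - 4 * t) * rpowTaylor (4 / b) t 5 + Y * rpowTaylor (1 + 2 / b) t 4 / 3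
      ≤ Y ^ 2 * (b - 4 * t) * (1 + t) ^ (4 / b) + Y * (1 + t) ^ (1 + 2 / b) / 3 := by
  have hb0 : 0 < b := by linarith
  have hY0 : 0 < Y := lt_of_lt_of_le (by norm_num) hY
  have ht0 : 0 ≤ t := by rw [ht, hc]; positivity
  have hT4 := rpowTaylor_le_one_add_rpow ht0
    (descPochhammer_five_eval_nonneg (p := 4 / b) (by positivity) ((div_le_one hb0).2 hb))
  have hT2 := rpowTaylor_le_one_add_rpow ht0
    (descPochhammer_four_eval_nonneg (p := 1 + 2 / b)
      (le_add_of_nonneg_right (by positivity))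
      (by linarith [(div_le_one hb0).2 (by linarith : (2 : ℝ) ≤ b)]))
  have := sub_four_mul_nonneg hb hY hc ht
  gcongr

end

theorem stmt_12 (b A τ : ℝ) (hb : 4 ≤ b) (hA : 0 < A)
    (hbA : 1 ≤ (b + 1) * (b * A))
    (hτ : τ = (b * A) ^ ((1 : ℝ) / b)
        * (1 + ((b + 2) / (12 * (b + 4))) * (b * A) ^ (-(2 : ℝ) / b)) ^ ((1 : ℝ) / b)) :
    b * (b * A) ^ (1 + (4 : ℝ) / b) + (1 / 3) * (b * A) ^ (1 + (2 : ℝ) / b)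
      + ((b + 2) ^ (2 : ℕ) / (72 * b * (b + 4))) * (b * A)
      + ((13 * b ^ (3 : ℕ) + 56 * b ^ (2 : ℕ) - 52 * b - 32) / (12 * b ^ (3 : ℕ)))
          * ((b + 2) / (12 * (b + 4))) ^ (3 : ℕ) * (b * A) ^ (1 - (2 : ℝ) / b)
    ≤ (b + 4) * τ ^ (4 : ℕ) * (b * A) - 4 * τ ^ (b + 4) + (1 / 3) * τ ^ (b + 2) := by
  have hb0 : 0 < b := by linarith
  set x := b * A
  have hx : 0 < x := by positivity
  set c := (b + 2) / (12 * (b + 4)) with hc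
  set Y := x ^ ((2 : ℝ) / b)
  have hY : 3⁻¹ ≤ Y := inv_three_le_rpow_two_div (by linarith) hx hbA
  set t := c / Y with ht
  have hτ' : τ = x ^ (1 / b) * (1 + t) ^ (1 / b) := by
    rw [hτ, neg_div, rpow_neg hx.le, ← div_eq_mul_inv]
  rw [combination_eq_of_eq_mul_rpow hb0.ne' hx (by positivity) hτ']
  calc _ = x * (b * Y ^ 2 + Y / 3 + (b + 2) ^ 2 / (72 * b * (b + 4))
        + (13 * b ^ 3 + 56 * b ^ 2 - 52 * b - 32) / (12 * b ^ 3) * c ^ 3 / Y) := by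
        rw [rpow_add hx, rpow_add hx, rpow_sub hx, rpow_one, rpow_four_div hx.le]
        ring
    _ ≤ _ := mul_le_mul_of_nonneg_left ((le_rpowTaylor_combination hb hY hc ht).trans
        (rpowTaylor_combination_le hb hY hc ht)) hx.le
end

section
/- Let n ≥ 1 be an integer, and let F : (0,∞) → R be defined by F(t) = (n/(n+4))·B_n^{−4/n}·k^{(n+4)/n}·t^{−4/n} + (1/(3(n+4)η²))·k^{(n+2)/n}·B_n^{−2/n}·t^{(2n−2)/n} + ((n+2)²/(72n(n+4)²η⁴))·k·t⁴, where k ≥ 1 is an integer, V > 0, and η ≥ (2π)^{−n}·B_n^{−1/n}·V^{(n+1)/n}. Then F is non-increasing on the interval (0, (2π)^{−n}·V]. -/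
open Real MeasureTheory Set

/-!
Write `β = B ^ (1/n)`, `κ = k ^ (1/n)`. On `(0, T]`, `T = (2π)⁻ⁿ V`, the sign of `F'(t)` is that of
`t ^ (4/n + 1) F'(t)`, whose positive part is a polynomial in `s = t ^ ((n+1)/n)`, and
`2π T ^ ((n+1)/n) ≤ η β` by the lower bound on `η`. Substituting this bound leaves a numerical
inequality in `n`, `κ ≥ 1` and `β`, which holds because the unit ball lies in the cube `[-1, 1]ⁿ`,
so `β ≤ 2`, and `2π ≥ 6`.
-/

lemma EuclideanSpace.volume_ball_le {ι : Type*} [Fintype ι] (x : EuclideanSpace ℝ ι) (r : ℝ) :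
    volume (Metric.ball x r) ≤ ENNReal.ofReal ((2 * r) ^ Fintype.card ι) := by
  rcases le_or_gt r 0 with hr | hr
  · simp [Metric.ball_eq_empty.2 hr]
  have hsub : Metric.ball x r ⊆ (MeasurableEquiv.toLp 2 (ι → ℝ)).symm ⁻¹' Metric.ball x.ofLp r := by
    intro y hy
    simp only [mem_preimage, MeasurableEquiv.coe_toLp_symm, Metric.mem_ball] at hy ⊢
    rw [dist_pi_lt_iff hr]
    intro i
    simpa [dist_eq_norm] using (PiLp.norm_apply_le (y - x) i).trans_lt (by rwa [← dist_eq_norm])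
  calc volume (Metric.ball x r)
      ≤ volume ((MeasurableEquiv.toLp 2 (ι → ℝ)).symm ⁻¹' Metric.ball x.ofLp r) := measure_mono hsub
    _ = ENNReal.ofReal ((2 * r) ^ Fintype.card ι) := by
      rw [(EuclideanSpace.volume_preserving_symm_measurableEquiv_toLp ι).measure_preimage_equiv,
        Real.volume_pi_ball _ hr]

lemma rpow_neg_natCast_div {x : ℝ} (hx : 0 ≤ x) (j : ℕ) (y : ℝ) :
    x ^ (-(j : ℝ) / y) = ((x ^ (1 / y)) ^ j)⁻¹ := by
  rw [neg_div, rpow_neg hx, ← rpow_mul_natCast hx, one_div_mul_eq_div]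

lemma rpow_add_natCast_div {x y : ℝ} (hx : 0 < x) (hy : y ≠ 0) (j : ℕ) :
    x ^ ((y + j) / y) = x * (x ^ (1 / y)) ^ j := by
  rw [add_div, div_self hy, rpow_add hx, rpow_one, ← rpow_mul_natCast hx.le, one_div_mul_eq_div]

lemma rpow_neg_natCast_mul_rpow_succ_div {c V : ℝ} (hc : 0 < c) (hV : 0 ≤ V) {n : ℕ} (hn : n ≠ 0) :
    (c ^ (-(n : ℝ)) * V) ^ (((n : ℝ) + 1) / n) = c ^ (-(n : ℝ)) * V ^ (((n : ℝ) + 1) / n) / c := by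
  rw [mul_rpow (rpow_nonneg hc.le _) hV, ← rpow_mul hc.le,
    show -(n : ℝ) * ((n + 1) / n) = -n - 1 by field_simp; ring, rpow_sub hc, rpow_one]
  ring

lemma antitoneOn_Ioc_of_rpow_deriv {a b c p q r T : ℝ}
    (h : ∀ t ∈ Ioo 0 T, b * q * t ^ (q - p) + c * r * t ^ (r - p) ≤ -(a * p)) :
    AntitoneOn (fun t : ℝ => a * t ^ p + b * t ^ q + c * t ^ r) (Ioc 0 T) := by
  have hderiv : ∀ t ∈ Ioi (0 : ℝ), HasDerivAt (fun t : ℝ => a * t ^ p + b * t ^ q + c * t ^ r)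
      (a * (p * t ^ (p - 1)) + b * (q * t ^ (q - 1)) + c * (r * t ^ (r - 1))) t := fun t ht =>
    (((hasDerivAt_rpow_const (Or.inl (ne_of_gt ht))).const_mul a).add
      ((hasDerivAt_rpow_const (Or.inl (ne_of_gt ht))).const_mul b)).add
      ((hasDerivAt_rpow_const (Or.inl (ne_of_gt ht))).const_mul c)
  refine antitoneOn_of_hasDerivWithinAt_nonpos (convex_Ioc 0 T)
    (f' := fun t => a * (p * t ^ (p - 1)) + b * (q * t ^ (q - 1)) + c * (r * t ^ (r - 1)))
    (fun t ht => (hderiv t ht.1).continuousAt.continuousWithinAt) ?_ ?_ <;> rw [interior_Ioc]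
  · exact fun t ht => (hderiv t ht.1).hasDerivWithinAt
  · intro t ht
    have hsplit : ∀ e, t ^ (e - 1) = t ^ (p - 1) * t ^ (e - p) := fun e => by
      rw [← rpow_add ht.1]; ring_nf
    have hfactor : a * (p * t ^ (p - 1)) + b * (q * t ^ (q - 1)) + c * (r * t ^ (r - 1))
        = t ^ (p - 1) * (b * q * t ^ (q - p) + c * r * t ^ (r - p) + a * p) := by
      rw [hsplit q, hsplit r]; ring
    rw [hfactor]
    exact mul_nonpos_of_nonneg_of_nonpos (rpow_nonneg ht.1.le _) (by linarith [h t ht])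

lemma reduced_coeff_inequality {x κ β c : ℝ} (hx : 1 ≤ x) (hκ : 1 ≤ κ) (hβ0 : 0 < β) (hβ : β ≤ 2)
    (hc : 6 ≤ c) :
    (x - 1) / (6 * x) * κ ^ 2 / c ^ 2 + (x + 2) ^ 2 / (72 * x * (x + 4)) * β ^ 4 / c ^ 4
      ≤ κ ^ 4 / β ^ 4 := by
  have hκ4 : 1 ≤ κ ^ 4 := one_le_pow₀ hκ
  have hβ4 : β ^ 4 ≤ 2 ^ 4 := pow_le_pow_left₀ hβ0.le hβ 4
  have hcoef₁ : (x - 1) / (6 * x) ≤ 1 / 6 := by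
    rw [div_le_iff₀ (by positivity)]; linarith
  have hcoef₂ : (x + 2) ^ 2 / (72 * x * (x + 4)) ≤ 1 / 40 := by
    rw [div_le_iff₀ (by positivity)]; nlinarith
  have hterm₁ : (x - 1) / (6 * x) * κ ^ 2 / c ^ 2 ≤ 1 / 6 * κ ^ 4 / 6 ^ 2 := by
    have : 0 ≤ (x - 1) / (6 * x) := div_nonneg (by linarith) (by positivity)
    have : κ ^ 2 ≤ κ ^ 4 := pow_le_pow_right₀ hκ (by norm_num)
    gcongr
  have hterm₂ : (x + 2) ^ 2 / (72 * x * (x + 4)) * β ^ 4 / c ^ 4 ≤ 1 / 40 * 2 ^ 4 / 6 ^ 4 := by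
    gcongr
  have hrhs : κ ^ 4 / 2 ^ 4 ≤ κ ^ 4 / β ^ 4 := by gcongr
  linarith

lemma scaled_deriv_inequality {x k κ β η c s : ℝ} (hx : 1 ≤ x) (hk : 0 ≤ k) (hκ : 1 ≤ κ)
    (hβ0 : 0 < β) (hβ : β ≤ 2) (hη : 0 < η) (hc : 6 ≤ c) (hs0 : 0 ≤ s) (hs : c * s ≤ η * β) :
    1 / (3 * (x + 4) * η ^ 2) * (k * κ ^ 2) * (β ^ 2)⁻¹ * ((2 * x - 2) / x) * s ^ 2
      + (x + 2) ^ 2 / (72 * x * (x + 4) ^ 2 * η ^ 4) * k * 4 * s ^ 4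
      ≤ -(x / (x + 4) * (β ^ 4)⁻¹ * (k * κ ^ 4) * (-4 / x)) := by
  have hx0 : 0 < x := by linarith
  have hc0 : 0 < c := by linarith
  set v := s / (η * β) with hv
  have hv0 : 0 ≤ v := by positivity
  have hvc : v ≤ c⁻¹ := by
    rw [hv, div_le_iff₀ (by positivity), ← div_eq_inv_mul, le_div_iff₀ hc0]; linarith
  have hcoef : 0 ≤ (x - 1) / (6 * x) := div_nonneg (by linarith) (by positivity)
  calc _ = 4 * k / (x + 4) * ((x - 1) / (6 * x) * κ ^ 2 * v ^ 2
          + (x + 2) ^ 2 / (72 * x * (x + 4)) * β ^ 4 * v ^ 4) := by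
        rw [hv]; field_simp; ring
    _ ≤ 4 * k / (x + 4) * ((x - 1) / (6 * x) * κ ^ 2 * c⁻¹ ^ 2
          + (x + 2) ^ 2 / (72 * x * (x + 4)) * β ^ 4 * c⁻¹ ^ 4) := by gcongr
    _ ≤ 4 * k / (x + 4) * (κ ^ 4 / β ^ 4) := by
        gcongr
        simpa only [inv_pow, div_eq_mul_inv] using reduced_coeff_inequality hx hκ hβ0 hβ hc
    _ = _ := by field_simp

lemma antitoneOn_Ioc_of_mul_rpow_le {x k κ β η c T : ℝ} (hx : 1 ≤ x) (hk : 0 ≤ k) (hκ : 1 ≤ κ)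
    (hβ0 : 0 < β) (hβ : β ≤ 2) (hη : 0 < η) (hc : 6 ≤ c)
    (hT : c * T ^ ((x + 1) / x) ≤ η * β) :
    AntitoneOn (fun t : ℝ =>
        x / (x + 4) * (β ^ 4)⁻¹ * (k * κ ^ 4) * t ^ (-(4 : ℝ) / x)
          + 1 / (3 * (x + 4) * η ^ 2) * (k * κ ^ 2) * (β ^ 2)⁻¹ * t ^ ((2 * x - 2) / x)
          + (x + 2) ^ 2 / (72 * x * (x + 4) ^ 2 * η ^ 4) * k * t ^ 4)
      (Ioc 0 T) := by
  have hx0 : x ≠ 0 := by positivity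
  suffices h : AntitoneOn (fun t : ℝ =>
      x / (x + 4) * (β ^ 4)⁻¹ * (k * κ ^ 4) * t ^ (-(4 : ℝ) / x)
        + 1 / (3 * (x + 4) * η ^ 2) * (k * κ ^ 2) * (β ^ 2)⁻¹ * t ^ ((2 * x - 2) / x)
        + (x + 2) ^ 2 / (72 * x * (x + 4) ^ 2 * η ^ 4) * k * t ^ (4 : ℝ)) (Ioc 0 T) by
    simpa only [rpow_ofNat] using h
  refine antitoneOn_Ioc_of_rpow_deriv fun t ht => ?_
  -- both exponent gaps are multiples of `(x + 1) / x`, so the bound is in `s = t ^ ((x + 1) / x)`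
  have hq : (2 * x - 2) / x - -(4 : ℝ) / x = (x + 1) / x * (2 : ℕ) := by field_simp; ring
  have hr : (4 : ℝ) - -(4 : ℝ) / x = (x + 1) / x * (4 : ℕ) := by field_simp; ring
  rw [hq, hr, rpow_mul_natCast ht.1.le, rpow_mul_natCast ht.1.le]
  refine scaled_deriv_inequality hx hk hκ hβ0 hβ hη hc (rpow_nonneg ht.1.le _) (hT.trans' ?_)
  gcongr
  exacts [ht.1.le, ht.2.le]

theorem stmt_15 (n k : ℕ) (hn : 1 ≤ n) (hk : 1 ≤ k) (V η : ℝ) (hV : 0 < V)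
    (B : ℝ)
    (hB : B = (volume (Metric.ball (0 : EuclideanSpace ℝ (Fin n)) 1)).toReal)
    (hη : (2 * π) ^ (-(n : ℝ)) * B ^ (-(1 : ℝ) / n) * V ^ (((n : ℝ) + 1) / n) ≤ η) :
    AntitoneOn (fun t : ℝ =>
        (n / ((n : ℝ) + 4)) * B ^ (-(4 : ℝ) / n) * (k : ℝ) ^ (((n : ℝ) + 4) / n) * t ^ (-(4 : ℝ) / n)
          + (1 / (3 * ((n : ℝ) + 4) * η ^ (2 : ℕ))) * (k : ℝ) ^ (((n : ℝ) + 2) / n)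
              * B ^ (-(2 : ℝ) / n) * t ^ ((2 * (n : ℝ) - 2) / n)
          + (((n : ℝ) + 2) ^ (2 : ℕ) / (72 * n * ((n : ℝ) + 4) ^ (2 : ℕ) * η ^ (4 : ℕ)))
              * (k : ℝ) * t ^ (4 : ℕ))
      (Ioc (0 : ℝ) ((2 * π) ^ (-(n : ℝ)) * V)) := by
  have hB0 : 0 < B := hB ▸ ENNReal.toReal_pos (Metric.measure_ball_pos volume _ one_pos).ne'
    measure_ball_lt_top.ne
  have hB_le : B ≤ 2 ^ n := by
    simpa [hB] using ENNReal.toReal_mono (by simp) (EuclideanSpace.volume_ball_le 0 1 (ι := Fin n))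
  have hβ_le : B ^ (1 / (n : ℝ)) ≤ 2 :=
    calc B ^ (1 / (n : ℝ)) ≤ ((2 : ℝ) ^ n) ^ (1 / (n : ℝ)) := by gcongr
      _ = 2 := by rw [one_div, pow_rpow_inv_natCast zero_le_two (by omega)]
  have hk0 : (0 : ℝ) < k := by exact_mod_cast hk
  have hB1 : B ^ (-(1 : ℝ) / n) = (B ^ (1 / (n : ℝ)))⁻¹ := by
    simpa using rpow_neg_natCast_div hB0.le 1 n
  have hη0 : 0 < η := lt_of_lt_of_le (by rw [hB1]; positivity) hη
  have hB4 : B ^ (-(4 : ℝ) / n) = ((B ^ (1 / (n : ℝ))) ^ 4)⁻¹ := by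
    exact_mod_cast rpow_neg_natCast_div hB0.le 4 n
  have hB2 : B ^ (-(2 : ℝ) / n) = ((B ^ (1 / (n : ℝ))) ^ 2)⁻¹ := by
    exact_mod_cast rpow_neg_natCast_div hB0.le 2 n
  have hk4 : (k : ℝ) ^ (((n : ℝ) + 4) / n) = k * ((k : ℝ) ^ (1 / (n : ℝ))) ^ 4 := by
    exact_mod_cast rpow_add_natCast_div (y := n) hk0 (by positivity) 4
  have hk2 : (k : ℝ) ^ (((n : ℝ) + 2) / n) = k * ((k : ℝ) ^ (1 / (n : ℝ))) ^ 2 := by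
    exact_mod_cast rpow_add_natCast_div (y := n) hk0 (by positivity) 2
  rw [hB4, hB2, hk4, hk2]
  refine antitoneOn_Ioc_of_mul_rpow_le (c := 2 * π) (by exact_mod_cast hn) hk0.le
    (one_le_rpow (by exact_mod_cast hk) (by positivity)) (by positivity) hβ_le hη0
    (by linarith [pi_gt_three]) ?_
  calc 2 * π * ((2 * π) ^ (-(n : ℝ)) * V) ^ (((n : ℝ) + 1) / n)
      = (2 * π) ^ (-(n : ℝ)) * B ^ (-(1 : ℝ) / n) * V ^ (((n : ℝ) + 1) / n)
          * B ^ (1 / (n : ℝ)) := by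
        rw [rpow_neg_natCast_mul_rpow_succ_div (by positivity) hV.le (by omega), hB1]
        field_simp
    _ ≤ η * B ^ (1 / (n : ℝ)) := by gcongr
end
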